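/- Every N-set is contained in an F_σ N-set which is a proper subgroup of (ℝ,+). -/

import Mathlib

open MeasureTheory Filter Set

/-- Distance from a real number to the nearest integer. -/
noncomputable def nintDist (x : ℝ) : ℝ := |x - round x|

/-- `E` is a Dirichlet set. -/
def IsDirichlet (E : Set ℝ) : Prop :=
  ∃ n : ℕ → ℕ, StrictMono n ∧ ∀ x ∈ E, ∀ k : ℕ, nintDist (n k * x) ≤ (1/2) ^ k

/-- `E` is a pseudo-Dirichlet set. -/
def IsPseudoDirichlet (E : Set ℝ) : Prop :=
  ∃ n : ℕ → ℕ, StrictMono n ∧ ∀ x ∈ E, ∀ᶠ k in atTop, nintDist (n k * x) ≤ (1/2) ^ k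

/-- `E` is an Arbault set. -/
def IsArbault (E : Set ℝ) : Prop :=
  ∃ n : ℕ → ℕ, StrictMono n ∧ ∀ x ∈ E,
    Tendsto (fun k => nintDist (n k * x)) atTop (nhds 0)

/-- `E` is an N-set. -/
def IsNSet (E : Set ℝ) : Prop :=
  ∃ a : ℕ → ℝ, (∀ n, 0 ≤ a n) ∧ ¬ Summable a ∧
    ∀ x ∈ E, Summable (fun n => a n * nintDist (n * x))

/-- `s` is an Fσ set: a countable union of closed sets. -/
def IsFsigma (s : Set ℝ) : Prop :=
  ∃ f : ℕ → Set ℝ, (∀ n, IsClosed (f n)) ∧ s = ⋃ n, f n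

lemma nintDist_eq_norm (x : ℝ) : nintDist x = ‖(x : UnitAddCircle)‖ :=
  UnitAddCircle.norm_eq.symm

lemma nintDist_nonneg (x : ℝ) : 0 ≤ nintDist x := abs_nonneg _

@[simp] lemma nintDist_zero : nintDist 0 = 0 := by simp [nintDist_eq_norm]

lemma nintDist_neg (x : ℝ) : nintDist (-x) = nintDist x := by
  simp only [nintDist_eq_norm, AddCircle.coe_neg, norm_neg]

lemma nintDist_add_le (x y : ℝ) : nintDist (x + y) ≤ nintDist x + nintDist y := by
  simpa only [nintDist_eq_norm, AddCircle.coe_add] using norm_add_le _ _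

lemma periodic_nintDist : Function.Periodic nintDist 1 := by
  intro x
  simp only [nintDist_eq_norm, AddCircle.coe_add, AddCircle.coe_period, add_zero]

@[fun_prop]
lemma continuous_nintDist : Continuous nintDist := by
  rw [funext nintDist_eq_norm]
  exact continuous_norm.comp (AddCircle.continuous_mk' 1)

lemma nintDist_eq_abs {x : ℝ} (hx : |x| ≤ 1 / 2) : nintDist x = |x| := by
  rw [nintDist_eq_norm, AddCircle.norm_coe_eq_abs_iff (p := 1) one_ne_zero]
  simpa using hx

lemma integral_abs_symm (c : ℝ) : ∫ x in -c..c, |x| = 2 * ∫ x in 0..c, |x| := by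
  rw [← intervalIntegral.integral_add_adjacent_intervals (b := 0), two_mul]
  · congr 1
    simpa using (intervalIntegral.integral_comp_neg (a := 0) (b := c) (fun x => |x|)).symm
  all_goals exact continuous_abs.intervalIntegrable _ _

lemma integral_nintDist_period (t : ℝ) : ∫ x in t..t + 1, nintDist x = 1 / 4 := by
  rw [periodic_nintDist.intervalIntegral_add_eq t (-(1 / 2))]
  have habs : ∫ x in -(1 / 2)..-(1 / 2) + 1, nintDist x = ∫ x in -(1 / 2)..(1 / 2 : ℝ), |x| := by
    norm_num only
    refine intervalIntegral.integral_congr fun x hx => nintDist_eq_abs ?_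
    rw [Set.uIcc_of_le (by norm_num)] at hx
    exact abs_le.2 hx
  rw [habs, integral_abs_symm,
    intervalIntegral.integral_congr (g := fun x => x) fun x hx => abs_of_nonneg ?_]
  · norm_num [integral_id]
  · rw [Set.uIcc_of_le (by norm_num)] at hx
    exact hx.1

lemma integral_nintDist_add_nat (t : ℝ) (m : ℕ) : ∫ x in t..t + m, nintDist x = m / 4 := by
  have := periodic_nintDist.intervalIntegral_add_zsmul_eq m t
    (continuous_nintDist.intervalIntegrable)
  simpa [integral_nintDist_period, div_eq_mul_inv] using this

lemma le_integral_nintDist_mul {c d : ℝ} {n : ℕ} (hcd : c ≤ d) (hn : 2 ≤ n * (d - c)) :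
    (d - c) / 8 ≤ ∫ x in c..d, nintDist (n * x) := by
  have hn0 : (0 : ℝ) < n := pos_of_mul_pos_left (by linarith) (sub_nonneg.2 hcd)
  set m := ⌊(n : ℝ) * (d - c)⌋₊
  have hm : (n : ℝ) * (d - c) - 1 < m := by
    linarith [Nat.lt_floor_add_one ((n : ℝ) * (d - c))]
  have hmd : n * c + m ≤ n * d := by
    linarith [Nat.floor_le (a := (n : ℝ) * (d - c)) (by positivity)]
  -- `[n c, n d]` contains `m` full periods of `nintDist`
  have hperiods : (m : ℝ) / 4 ≤ ∫ u in n * c..n * d, nintDist u := by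
    rw [← integral_nintDist_add_nat]
    exact intervalIntegral.integral_mono_interval le_rfl (by simp) hmd
      (.of_forall nintDist_nonneg) (continuous_nintDist.intervalIntegrable _ _)
  rw [intervalIntegral.integral_comp_mul_left nintDist hn0.ne', smul_eq_mul, le_inv_mul_iff₀ hn0]
  linarith

section SummableSeries

variable {X : Type*} {f : ℕ → X → ℝ}

lemma setOf_summable_eq_iUnion (hf0 : ∀ n x, 0 ≤ f n x) :
    {x | Summable fun n => f n x} = ⋃ M : ℕ, {x | ∀ N, ∑ n ∈ Finset.range N, f n x ≤ M} := by
  ext x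
  simp only [mem_ofPred_eq, mem_iUnion]
  refine ⟨fun hx => ⟨⌈∑' n, f n x⌉₊, fun N => ?_⟩,
    fun ⟨M, hM⟩ => summable_of_sum_range_le (hf0 · x) hM⟩
  exact (hx.sum_le_tsum _ fun n _ => hf0 n x).trans (Nat.le_ceil _)

lemma isClosed_setOf_sum_range_le [TopologicalSpace X] (hf : ∀ n, Continuous (f n)) (M : ℝ) :
    IsClosed {x | ∀ N, ∑ n ∈ Finset.range N, f n x ≤ M} := by
  simp only [ofPred_forall]
  exact isClosed_iInter fun N => isClosed_le (by fun_prop) continuous_const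

end SummableSeries

section SummableSeriesOnReal

variable {f : ℕ → ℝ → ℝ}

lemma isFsigma_setOf_summable (hf : ∀ n, Continuous (f n)) (hf0 : ∀ n x, 0 ≤ f n x) :
    IsFsigma {x | Summable fun n => f n x} :=
  ⟨_, fun M => isClosed_setOf_sum_range_le hf M, setOf_summable_eq_iUnion hf0⟩

lemma exists_Icc_sum_range_le_of_summable (hf : ∀ n, Continuous (f n)) (hf0 : ∀ n x, 0 ≤ f n x)
    (hsum : ∀ x, Summable fun n => f n x) :
    ∃ c d M : ℝ, c < d ∧ ∀ x ∈ Icc c d, ∀ N, ∑ n ∈ Finset.range N, f n x ≤ M := by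
  obtain ⟨M, c, hc⟩ := nonempty_interior_of_iUnion_of_closed
    (fun M : ℕ => isClosed_setOf_sum_range_le hf M)
    ((setOf_summable_eq_iUnion hf0).symm.trans (eq_univ_of_forall hsum))
  obtain ⟨d, hcd, hsub⟩ := mem_nhdsGE_iff_exists_Icc_subset.1
    (nhdsWithin_le_nhds (mem_interior_iff_mem_nhds.1 hc))
  exact ⟨c, d, M, hcd, hsub⟩

lemma summable_intervalIntegral_of_sum_range_le (hf : ∀ n, Continuous (f n))
    (hf0 : ∀ n x, 0 ≤ f n x) {c d M : ℝ} (hcd : c ≤ d)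
    (hM : ∀ x ∈ Icc c d, ∀ N, ∑ n ∈ Finset.range N, f n x ≤ M) :
    Summable fun n => ∫ x in c..d, f n x := by
  refine summable_of_sum_range_le (c := M * (d - c))
    (fun n => intervalIntegral.integral_nonneg hcd fun x _ => hf0 n x) fun N => ?_
  rw [← intervalIntegral.integral_finsetSum fun n _ => (hf n).intervalIntegrable _ _]
  calc ∫ x in c..d, ∑ n ∈ Finset.range N, f n x ≤ ∫ _ in c..d, M :=
        intervalIntegral.integral_mono_on hcd ((by fun_prop : Continuous _).intervalIntegrable _ _)
          intervalIntegrable_const fun x hx => hM x hx N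
    _ = M * (d - c) := by simp [mul_comm]

lemma exists_summable_intervalIntegral (hf : ∀ n, Continuous (f n)) (hf0 : ∀ n x, 0 ≤ f n x)
    (hsum : ∀ x, Summable fun n => f n x) :
    ∃ c d : ℝ, c < d ∧ Summable fun n => ∫ x in c..d, f n x := by
  obtain ⟨c, d, M, hcd, hM⟩ := exists_Icc_sum_range_le_of_summable hf hf0 hsum
  exact ⟨c, d, hcd, summable_intervalIntegral_of_sum_range_le hf hf0 hcd.le hM⟩

end SummableSeriesOnReal

lemma exists_not_summable_mul_nintDist {a : ℕ → ℝ} (ha0 : ∀ n, 0 ≤ a n) (ha : ¬ Summable a) :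
    ∃ x, ¬ Summable fun n => a n * nintDist (n * x) := by
  by_contra! hsum
  obtain ⟨c, d, hcd, hint⟩ :=
    exists_summable_intervalIntegral (f := fun n x => a n * nintDist (n * x)) (fun n => by fun_prop)
      (fun n x => mul_nonneg (ha0 n) (nintDist_nonneg _)) hsum
  have hlen : 0 < d - c := sub_pos.2 hcd
  refine ha ((hint.mul_left (8 / (d - c))).of_norm_bounded_eventually_nat ?_)
  filter_upwards [eventually_ge_atTop ⌈2 / (d - c)⌉₊] with n hn
  have hn' : 2 ≤ n * (d - c) := by
    rw [← div_le_iff₀ hlen]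
    exact (Nat.le_ceil _).trans (by exact_mod_cast hn)
  calc ‖a n‖ = 8 / (d - c) * (a n * ((d - c) / 8)) := by
        rw [Real.norm_of_nonneg (ha0 n)]; field_simp
    _ ≤ 8 / (d - c) * (a n * ∫ x in c..d, nintDist (n * x)) := by
        gcongr
        · exact ha0 n
        · exact le_integral_nintDist_mul hcd.le hn'
    _ = 8 / (d - c) * ∫ x in c..d, a n * nintDist (n * x) := by
        rw [intervalIntegral.integral_const_mul]

def summabilitySubgroup (a : ℕ → ℝ) (ha0 : ∀ n, 0 ≤ a n) : AddSubgroup ℝ where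
  carrier := {x | Summable fun n => a n * nintDist (n * x)}
  zero_mem' := by simp
  add_mem' {x y} hx hy := by
    refine .of_nonneg_of_le (fun n => mul_nonneg (ha0 n) (nintDist_nonneg _))
      (fun n => ?_) (hx.add hy)
    rw [← mul_add, mul_add]
    exact mul_le_mul_of_nonneg_left (nintDist_add_le _ _) (ha0 n)
  neg_mem' {x} hx := by simpa only [mem_ofPred_eq, mul_neg, nintDist_neg] using hx

theorem stmt12 (E : Set ℝ) (hE : IsNSet E) :
    ∃ G : AddSubgroup ℝ, E ⊆ (G : Set ℝ) ∧ IsNSet (G : Set ℝ) ∧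
      IsFsigma (G : Set ℝ) ∧ (G : Set ℝ) ≠ Set.univ := by
  obtain ⟨a, ha0, ha, hE⟩ := hE
  obtain ⟨x, hx⟩ := exists_not_summable_mul_nintDist ha0 ha
  exact ⟨summabilitySubgroup a ha0, hE, ⟨a, ha0, ha, fun _ => id⟩,
    isFsigma_setOf_summable (fun n => by fun_prop)
      (fun n x => mul_nonneg (ha0 n) (nintDist_nonneg _)),
    (ne_univ_iff_exists_notMem _).2 ⟨x, hx⟩⟩
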